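/- For every standard finite tree T and every finite set B ⊆ ω₁ \ {0} with ht[T] ⊆ B, there exists a standard finite tree U which is a simple extension of T with ht[U] = B. -/

import Mathlib

/-
To reach the heights `B`, insert the missing heights one at a time: simple extensions compose.
To insert a single height `β ∉ ht[T]`, let `ν` be the least height of `T` above `β`, or the top
level of `T` if there is none, and add one new node `n t` of height `β` for every `t` on level `ν`.
The new order is `x < y ↔ ht x < ht y ∧ π x ≤_T π y`, where `π` fixes `T` and sends `n t` to `t`;
it is a tree order because `π` is monotone in height and injective on each level. Each `t` on level
`ν` drops to its own `n t`, which gives the unique drop-downs.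
-/
noncomputable section
open scoped Classical

namespace AKST

/-- The first uncountable ordinal. -/
def ω1 : Ordinal := (Cardinal.aleph 1).ord

/-- The second uncountable ordinal. -/
def ω2 : Ordinal := (Cardinal.aleph 2).ord

/-- The height of a countable ordinal `γ`: the unique `α` with `ω·α ≤ γ < ω·(α+1)`. -/
def ht (γ : Ordinal) : Ordinal := γ / Ordinal.omega0

/-- A standard finite tree. -/
structure SFT where
  elems : Finset Ordinal
  lt : Ordinal → Ordinal → Prop
  zero_mem : 0 ∈ elems
  mem_ok : ∀ x ∈ elems, x = 0 ∨ (Ordinal.omega0 ≤ x ∧ x < ω1)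
  lt_mem : ∀ {x y}, lt x y → x ∈ elems ∧ y ∈ elems
  lt_trans' : ∀ {x y z}, lt x y → lt y z → lt x z
  lt_irrefl' : ∀ x, ¬ lt x x
  pred_linear : ∀ {x y z}, lt y x → lt z x → lt y z ∨ y = z ∨ lt z y
  lt_ht : ∀ {x y}, lt x y → ht x < ht y
  pred_level : ∀ x ∈ elems, ∀ α, (∃ z ∈ elems, ht z = α) → α < ht x →
    ∃ y ∈ elems, ht y = α ∧ lt y x

namespace SFT

/-- The non-strict tree order. -/
def le (T : SFT) (x y : Ordinal) : Prop := T.lt x y ∨ (x = y ∧ x ∈ T.elems)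

/-- `ht[T]`: the set of nonzero heights of elements of `T`. -/
def heights (T : SFT) : Set Ordinal := {α | α ≠ 0 ∧ ∃ x ∈ T.elems, ht x = α}

/-- Level `α` of `T`. -/
def level (T : SFT) (α : Ordinal) : Set Ordinal := {x | x ∈ T.elems ∧ ht x = α}

/-- `max(ht[T])`. -/
def maxHeight (T : SFT) : Ordinal := sSup T.heights

/-- The least element of `ht[T]` greater than `α`. -/
def minAbove (T : SFT) (α : Ordinal) : Ordinal := sInf {β | β ∈ T.heights ∧ α < β}

/-- The drop-down `x↾α`: the unique element of `T` of height `α` below `x`. -/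
def drop (T : SFT) (α x : Ordinal) : Ordinal :=
  if h : ∃ y, y ∈ T.elems ∧ ht y = α ∧ T.lt y x then h.choose else 0

/-- `z` is the meet of `x` and `y` in `T`. -/
def isMeet (T : SFT) (x y z : Ordinal) : Prop :=
  T.le z x ∧ T.le z y ∧ ∀ w, T.le w x → T.le w y → T.le w z

/-- The meet `x ∧_T y`. -/
def meet (T : SFT) (x y : Ordinal) : Ordinal :=
  if h : ∃ z, T.isMeet x y z then h.choose else 0

/-- `U` extends `T`. -/
def Ext (T U : SFT) : Prop :=
  (↑T.elems : Set Ordinal) ⊆ ↑U.elems ∧ ∀ {x y}, T.lt x y → U.lt x y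

/-- `X` has unique drop-downs to `α` in `T`. -/
def UniqueDrops (T : SFT) (α : Ordinal) (X : Set Ordinal) : Prop :=
  ∀ x ∈ X, ∀ y ∈ X, T.drop α x = T.drop α y → x = y

/-- `U` is a simple extension of `T`. -/
def SimpleExt (U T : SFT) : Prop :=
  Ext T U ∧
  (∀ x ∈ U.elems, x ∉ T.elems → ht x ∉ T.heights) ∧
  (∀ α, α ∈ U.heights → α ∉ T.heights → α < T.maxHeight →
     U.UniqueDrops α (T.level (T.minAbove α)))

/-- `x` and `y` are incomparable in `T`. -/
def Incomp (T : SFT) (x y : Ordinal) : Prop := x ≠ y ∧ ¬ T.lt x y ∧ ¬ T.lt y x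

/-- `T` is normal: every element has successors at every higher occupied level. -/
def Normal (T : SFT) : Prop :=
  ∀ x ∈ T.elems, ∀ γ ∈ T.heights, ht x < γ → ∃ y ∈ T.elems, ht y = γ ∧ T.lt x y

end SFT

/-! Partial functions on a tree, represented by their graphs. -/

def dom (f : Set (Ordinal × Ordinal)) : Set Ordinal := {x | ∃ y, (x, y) ∈ f}

def ran (f : Set (Ordinal × Ordinal)) : Set Ordinal := {y | ∃ x, (x, y) ∈ f}

/-- The graph is single-valued. -/
def FuncGraph (f : Set (Ordinal × Ordinal)) : Prop :=
  ∀ {x y y'}, (x, y) ∈ f → (x, y') ∈ f → y = y'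

/-- The graph is injective. -/
def InjGraph (f : Set (Ordinal × Ordinal)) : Prop :=
  ∀ {x x' y}, (x, y) ∈ f → (x', y) ∈ f → x = x'

/-- The graph is a partial function from `T` to `T`. -/
def Carr (T : SFT) (f : Set (Ordinal × Ordinal)) : Prop :=
  ∀ p ∈ f, p.1 ∈ T.elems ∧ p.2 ∈ T.elems

/-- Strictly increasing. -/
def StrictIncr (T : SFT) (f : Set (Ordinal × Ordinal)) : Prop :=
  ∀ {x y x' y'}, (x, y) ∈ f → (x', y') ∈ f → T.lt x x' → T.lt y y'

/-- Level preserving. -/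
def LevelPres (f : Set (Ordinal × Ordinal)) : Prop :=
  ∀ p ∈ f, ht p.1 = ht p.2

/-- Downwards closed (the domain is closed under drop-downs). -/
def DownClosedDom (T : SFT) (f : Set (Ordinal × Ordinal)) : Prop :=
  ∀ x y, (x, y) ∈ f → ∀ β ∈ T.heights, β < ht x →
    ∃ x' y', x' ∈ T.elems ∧ ht x' = β ∧ T.lt x' x ∧ (x', y') ∈ f

/-- No fixed points other than 0. -/
def NoFix (f : Set (Ordinal × Ordinal)) : Prop := ∀ x, (x, x) ∈ f → x = 0

/-- `f` is a standard function on `T`. -/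
def IsStdFun (T : SFT) (f : Set (Ordinal × Ordinal)) : Prop :=
  Carr T f ∧ FuncGraph f ∧ InjGraph f ∧ StrictIncr T f ∧ LevelPres f ∧
    DownClosedDom T f ∧ NoFix f

/-- `f^m(x) = y`, for `m ∈ {-1, 1}`. -/
def appPow (f : Set (Ordinal × Ordinal)) (m : ℤ) (x y : Ordinal) : Prop :=
  (m = 1 ∧ (x, y) ∈ f) ∨ (m = -1 ∧ (y, x) ∈ f)

/-- `X↾α` and `X` are `f`-consistent. -/
def Consistent (T : SFT) (f : Set (Ordinal × Ordinal)) (α : Ordinal) (X : Set Ordinal) : Prop :=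
  ∀ x ∈ X, ∀ y ∈ X, ((T.drop α x, T.drop α y) ∈ f ↔ (x, y) ∈ f)

/-- The family `{F τ : τ ∈ A}` is separated on the tuple `a 0, ..., a (n-1)`. -/
def SepOnTuple (F : Ordinal → Set (Ordinal × Ordinal)) (A : Finset Ordinal)
    (n : ℕ) (a : ℕ → Ordinal) : Prop :=
  ∀ i < n, ∀ j₀ < i, ∀ j₁ < i, ∀ m₀ m₁ : ℤ, ∀ τ₀ ∈ A, ∀ τ₁ ∈ A,
    (m₀ = 1 ∨ m₀ = -1) → (m₁ = 1 ∨ m₁ = -1) →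
    appPow (F τ₀) m₀ (a i) (a j₀) → appPow (F τ₁) m₁ (a i) (a j₁) →
    j₀ = j₁ ∧ m₀ = m₁ ∧ τ₀ = τ₁

/-- The family is separated on the set `X`. -/
def SepOnSet (F : Ordinal → Set (Ordinal × Ordinal)) (A : Finset Ordinal)
    (X : Set Ordinal) : Prop :=
  ∃ (n : ℕ) (a : ℕ → Ordinal), (∀ i < n, ∀ j < n, a i = a j → i = j) ∧
    X = a '' {i | i < n} ∧ SepOnTuple F A n a

/-- The family is `ρ`-separated on the tuple `a 0, ..., a (n-1)` (of elements of level `α`). -/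
def RhoSepOnTuple (ρ : Ordinal → Ordinal → Ordinal) (F : Ordinal → Set (Ordinal × Ordinal))
    (A : Finset Ordinal) (α : Ordinal) (n : ℕ) (a : ℕ → Ordinal) : Prop :=
  ∀ i < n, ∀ j₀ < i, ∀ j₁ < i, ∀ m₀ m₁ : ℤ, ∀ τ₀ ∈ A, ∀ τ₁ ∈ A,
    (m₀ = 1 ∨ m₀ = -1) → (m₁ = 1 ∨ m₁ = -1) →
    appPow (F τ₀) m₀ (a i) (a j₀) → appPow (F τ₁) m₁ (a i) (a j₁) →
    j₀ = j₁ ∧ ((m₀ = m₁ ∧ τ₀ = τ₁) ∨ α ≤ ρ τ₀ τ₁)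

/-- The family is `ρ`-separated on the set `X ⊆ T_α`. -/
def RhoSepOnSet (ρ : Ordinal → Ordinal → Ordinal) (F : Ordinal → Set (Ordinal × Ordinal))
    (A : Finset Ordinal) (α : Ordinal) (X : Set Ordinal) : Prop :=
  ∃ (n : ℕ) (a : ℕ → Ordinal), (∀ i < n, ∀ j < n, a i = a j → i = j) ∧
    X = a '' {i | i < n} ∧ RhoSepOnTuple ρ F A α n a

/-- There is a loop in `X` with respect to the family `{F τ : τ ∈ A}`. -/
def HasLoop (F : Ordinal → Set (Ordinal × Ordinal)) (A : Finset Ordinal)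
    (X : Set Ordinal) : Prop :=
  ∃ p : ℕ, 4 ≤ p ∧ ∃ c : ℕ → Ordinal,
    (∀ i < p, c i ∈ X) ∧
    (∀ i < p - 1, ∀ j < p - 1, c i = c j → i = j) ∧
    c 0 = c (p - 1) ∧
    (∀ i < p - 1, ∃ τ ∈ A, ∃ m : ℤ, (m = 1 ∨ m = -1) ∧ appPow (F τ) m (c i) (c (i + 1)))

/-- `p` is a member of `T ⊗ T`. -/
def InOtimes (T : SFT) (p : Ordinal × Ordinal) : Prop :=
  p.1 ∈ T.elems ∧ p.2 ∈ T.elems ∧ ht p.1 = ht p.2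

/-- `f ⊆ T ⊗ T` is downwards closed as a subset of `T ⊗ T`. -/
def DCPairs (T : SFT) (f : Set (Ordinal × Ordinal)) : Prop :=
  ∀ p ∈ f, ∀ q, InOtimes T q → T.le q.1 p.1 → T.le q.2 p.2 → q ∈ f

/-- The downward closure of `f` in `U`. -/
def dcl (U : SFT) (f : Set (Ordinal × Ordinal)) : Set (Ordinal × Ordinal) :=
  {p | InOtimes U p ∧ ∃ q ∈ f, U.le p.1 q.1 ∧ U.le p.2 q.2}

end AKST

open AKST AKST.SFT

namespace AKST

open Ordinal

lemma ht_omega0_mul_add (β : Ordinal) (n : ℕ) : ht (ω * β + n) = β := by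
  rw [ht, mul_add_div _ omega0_ne_zero, div_eq_zero_of_lt (natCast_lt_omega0 n), add_zero]

lemma omega0_le_omega0_mul_add {β : Ordinal} (hβ : β ≠ 0) (n : ℕ) : ω ≤ ω * β + n :=
  (le_mul_left ω (pos_iff_ne_zero.2 hβ)).trans le_self_add

lemma omega0_mul_add_lt_ω1 {β : Ordinal} (hβ : β < ω1) (n : ℕ) : ω * β + n < ω1 := by
  have hc : Cardinal.aleph0 ≤ Cardinal.aleph 1 := Cardinal.aleph0_le_aleph 1
  have hω : ω < ω1 := Cardinal.omega0_lt_ord.2 Cardinal.aleph0_lt_aleph_one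
  exact isPrincipal_add_ord hc (isPrincipal_mul_ord hc hω hβ) ((natCast_lt_omega0 n).trans hω)

namespace SFT

variable {T U : SFT} {α β ν t x y z : Ordinal}

lemma le_refl_of_mem (hx : x ∈ T.elems) : T.le x x := Or.inr ⟨rfl, hx⟩

lemma le.trans (h₁ : T.le x y) (h₂ : T.le y z) : T.le x z := by
  rcases h₁ with h₁ | ⟨rfl, -⟩
  · rcases h₂ with h₂ | ⟨rfl, -⟩
    exacts [Or.inl (T.lt_trans' h₁ h₂), Or.inl h₁]
  · exact h₂

lemma le_total_of_le (hx : T.le x z) (hy : T.le y z) : T.le x y ∨ T.le y x := by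
  rcases hx with hx | ⟨rfl, -⟩
  · rcases hy with hy | ⟨rfl, -⟩
    · rcases T.pred_linear hx hy with h | rfl | h
      exacts [Or.inl (Or.inl h), Or.inl (le_refl_of_mem (T.lt_mem hx).1), Or.inr (Or.inl h)]
    · exact Or.inl (Or.inl hx)
  · exact Or.inr hy

lemma le.eq_of_ht_le (h : T.le x y) (hyx : ht y ≤ ht x) : x = y :=
  h.elim (fun h => absurd hyx (T.lt_ht h).not_ge) (·.1)

lemma exists_le_of_ht_le (hx : x ∈ T.elems) (hα : ∃ z ∈ T.elems, ht z = α) (hαx : α ≤ ht x) :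
    ∃ y ∈ T.elems, ht y = α ∧ T.le y x := by
  rcases hαx.eq_or_lt with rfl | hlt
  · exact ⟨x, hx, rfl, le_refl_of_mem hx⟩
  · obtain ⟨y, hy, hyα, hyx⟩ := T.pred_level x hx α hα hlt
    exact ⟨y, hy, hyα, Or.inl hyx⟩

lemma eq_of_lt_of_lt_of_ht_eq (hy : T.lt y x) (hz : T.lt z x) (h : ht y = ht z) : y = z :=
  (le_total_of_le (Or.inl hy) (Or.inl hz)).elim (·.eq_of_ht_le h.ge) (·.eq_of_ht_le h.le ▸ rfl)

lemma drop_eq (hy : y ∈ T.elems) (hyα : ht y = α) (hyx : T.lt y x) : T.drop α x = y := by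
  have h : ∃ z, z ∈ T.elems ∧ ht z = α ∧ T.lt z x := ⟨y, hy, hyα, hyx⟩
  rw [drop, dif_pos h]
  exact eq_of_lt_of_lt_of_ht_eq h.choose_spec.2.2 hyx (h.choose_spec.2.1.trans hyα.symm)

lemma drop_spec (hx : x ∈ T.elems) (hα : α ∈ T.heights) (hαx : α < ht x) :
    T.drop α x ∈ T.level α ∧ T.lt (T.drop α x) x := by
  obtain ⟨y, hy, hyα, hyx⟩ := T.pred_level x hx α hα.2 hαx
  rw [drop_eq hy hyα hyx]
  exact ⟨⟨hy, hyα⟩, hyx⟩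

lemma drop_eq_drop_of_lt (hyx : T.lt y x) (hα : α ∈ T.heights) (hαy : α < ht y) :
    T.drop α x = T.drop α y := by
  obtain ⟨⟨hd, hdα⟩, hdy⟩ := drop_spec (T.lt_mem hyx).1 hα hαy
  exact drop_eq hd hdα (T.lt_trans' hdy hyx)

lemma heights_finite (T : SFT) : T.heights.Finite :=
  (T.elems.finite_toSet.image ht).subset fun _ ⟨_, z, hz, hzα⟩ => ⟨z, hz, hzα⟩

lemma le_maxHeight (hα : α ∈ T.heights) : α ≤ T.maxHeight :=
  le_csSup T.heights_finite.bddAbove hα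

lemma maxHeight_mono (h : T.heights ⊆ U.heights) : T.maxHeight ≤ U.maxHeight :=
  csSup_le_csSup' U.heights_finite.bddAbove h

lemma minAbove_le (hβ : β ∈ T.heights) (hαβ : α < β) : T.minAbove α ≤ β :=
  csInf_le (OrderBot.bddBelow _) ⟨hβ, hαβ⟩

lemma minAbove_spec (hβ : β ∈ T.heights) (hαβ : α < β) :
    T.minAbove α ∈ T.heights ∧ α < T.minAbove α :=
  csInf_mem (s := {β | β ∈ T.heights ∧ α < β}) ⟨β, hβ, hαβ⟩

lemma minAbove_eq (hβ : β ∈ T.heights) (hαβ : α < β)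
    (hmin : ∀ γ ∈ T.heights, α < γ → β ≤ γ) : T.minAbove α = β :=
  (minAbove_le hβ hαβ).antisymm (le_csInf ⟨β, hβ, hαβ⟩ fun γ hγ => hmin γ hγ.1 hγ.2)

lemma Ext.trans {T' : SFT} (h₁ : Ext T T') (h₂ : Ext T' U) : Ext T U :=
  ⟨h₁.1.trans h₂.1, fun h => h₂.2 (h₁.2 h)⟩

lemma Ext.heights_subset (h : Ext T U) : T.heights ⊆ U.heights :=
  fun _ ⟨hα0, z, hz, hzα⟩ => ⟨hα0, z, h.1 hz, hzα⟩

lemma Ext.level_subset (h : Ext T U) : T.level α ⊆ U.level α :=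
  fun _ ⟨hx, hxα⟩ => ⟨h.1 hx, hxα⟩

lemma Ext.drop_eq (h : Ext T U) (hx : x ∈ T.elems) (hα : α ∈ T.heights) (hαx : α < ht x) :
    U.drop α x = T.drop α x :=
  have ⟨⟨hd, hdα⟩, hdx⟩ := drop_spec hx hα hαx
  SFT.drop_eq (h.1 hd) hdα (h.2 hdx)

lemma SimpleExt.refl (T : SFT) : SimpleExt T T :=
  ⟨⟨subset_rfl, id⟩, fun _ hx hx' => absurd hx hx', fun _ h h' _ => absurd h h'⟩

theorem SimpleExt.trans {T' : SFT} (h₁ : SimpleExt T' T) (h₂ : SimpleExt U T') :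
    SimpleExt U T := by
  obtain ⟨hext₁, hnew₁, huniq₁⟩ := h₁
  obtain ⟨hext₂, hnew₂, huniq₂⟩ := h₂
  refine ⟨hext₁.trans hext₂, fun x hxU hxT => ?_, fun α hαU hαT hαmax => ?_⟩
  · by_cases hxT' : x ∈ T'.elems
    · exact hnew₁ x hxT' hxT
    · exact fun h => hnew₂ x hxU hxT' (hext₁.heights_subset h)
  obtain ⟨γ, hγ, hαγ⟩ := exists_lt_of_lt_csSup' hαmax
  obtain ⟨hν, hαν⟩ := minAbove_spec hγ hαγ
  intro t htν t' htν' hdrop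
  by_cases hαT' : α ∈ T'.heights
  · refine huniq₁ α hαT' hαT hαmax t htν t' htν' ?_
    rwa [hext₂.drop_eq (hext₁.1 htν.1) hαT' (htν.2 ▸ hαν),
      hext₂.drop_eq (hext₁.1 htν'.1) hαT' (htν'.2 ▸ hαν)] at hdrop
  have huniq := huniq₂ α hαU hαT' (hαmax.trans_le (maxHeight_mono hext₁.heights_subset))
  obtain ⟨hν', hαν'⟩ := minAbove_spec (hext₁.heights_subset hν) hαν
  rcases (minAbove_le (hext₁.heights_subset hν) hαν).eq_or_lt with heq | hlt
  · rw [heq] at huniq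
    exact huniq t (hext₁.level_subset htν) t' (hext₁.level_subset htν') hdrop
  -- the level of `T'` just above `α` is new and lies strictly between `α` and `T.minAbove α`
  have hν'T : T'.minAbove α ∉ T.heights := fun h => hlt.not_ge (minAbove_le h hαν')
  have hmin : T.minAbove (T'.minAbove α) = T.minAbove α :=
    minAbove_eq hν hlt fun γ hγ hγ' => minAbove_le hγ (hαν'.trans hγ')
  obtain ⟨hy, hyt⟩ := drop_spec (hext₁.1 htν.1) hν' (htν.2 ▸ hlt)
  obtain ⟨hy', hyt'⟩ := drop_spec (hext₁.1 htν'.1) hν' (htν'.2 ▸ hlt)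
  refine huniq₁ _ hν' hν'T (hlt.trans_le (le_maxHeight hν)) t (by rwa [hmin]) t'
    (by rwa [hmin]) (huniq _ hy _ hy' ?_)
  rwa [← drop_eq_drop_of_lt (hext₂.2 hyt) hαU (hαν'.trans_eq hy.2.symm),
    ← drop_eq_drop_of_lt (hext₂.2 hyt') hαU (hαν'.trans_eq hy'.2.symm)]

lemma exists_of_proj (T : SFT) (E : Finset Ordinal) (π : Ordinal → Ordinal)
    (hE : T.elems ⊆ E) (hok : ∀ x ∈ E, x = 0 ∨ (ω ≤ x ∧ x < ω1))
    (hmono : ∀ x ∈ E, ∀ y ∈ E, ht x ≤ ht y → ht (π x) ≤ ht (π y))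
    (hinj : ∀ x ∈ E, ∀ y ∈ E, ht x = ht y → π x = π y → x = y)
    (hlevel : ∀ x ∈ E, ∀ α, (∃ z ∈ E, ht z = α) → α < ht x →
      ∃ y ∈ E, ht y = α ∧ T.le (π y) (π x)) :
    ∃ U : SFT, U.elems = E ∧
      ∀ x y, U.lt x y ↔ x ∈ E ∧ y ∈ E ∧ ht x < ht y ∧ T.le (π x) (π y) := by
  have hle : ∀ {a b x}, a ∈ E → b ∈ E → ht a ≤ ht b → T.le (π a) (π x) → T.le (π b) (π x) →
      T.le (π a) (π b) := by
    intro a b x ha hb hab hax hbx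
    rcases le_total_of_le hax hbx with h | h
    · exact h
    · have hba := h.eq_of_ht_le (hmono a ha b hb hab)
      rw [hba] at h ⊢
      exact h
  refine ⟨{ elems := E
            lt := fun x y => x ∈ E ∧ y ∈ E ∧ ht x < ht y ∧ T.le (π x) (π y)
            zero_mem := hE T.zero_mem
            mem_ok := hok
            lt_mem := fun h => ⟨h.1, h.2.1⟩
            lt_trans' := fun h₁ h₂ =>
              ⟨h₁.1, h₂.2.1, h₁.2.2.1.trans h₂.2.2.1, h₁.2.2.2.trans h₂.2.2.2⟩
            lt_irrefl' := fun _ h => lt_irrefl _ h.2.2.1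
            pred_linear := ?_
            lt_ht := fun h => h.2.2.1
            pred_level := fun x hx α hα hαx =>
              have ⟨y, hy, hyα, hyx⟩ := hlevel x hx α hα hαx
              ⟨y, hy, hyα, hy, hx, hyα ▸ hαx, hyx⟩ }, rfl, fun _ _ => Iff.rfl⟩
  rintro x y z ⟨hy, -, -, hyx⟩ ⟨hz, -, -, hzx⟩
  rcases lt_trichotomy (ht y) (ht z) with h | h | h
  · exact Or.inl ⟨hy, hz, h, hle hy hz h.le hyx hzx⟩
  · exact Or.inr (Or.inl (hinj y hy z hz h
      ((hle hy hz h.le hyx hzx).eq_of_ht_le (hmono z hz y hy h.ge))))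
  · exact Or.inr (Or.inr ⟨hz, hy, h, hle hz hy h.le hzx hyx⟩)

/-- `ν` is an occupied level of `T` with no level of `T` strictly between `β` and `ν`, and it lies
above `β` whenever some level of `T` does. -/
structure IsAdjacentLevel (T : SFT) (β ν : Ordinal) : Prop where
  occupied : ∃ t ∈ T.elems, ht t = ν
  below : ∀ x ∈ T.elems, ht x < β → ht x ≤ ν
  above : ∀ x ∈ T.elems, β < ht x → β < ν ∧ ν ≤ ht x

lemma exists_isAdjacentLevel (T : SFT) (β : Ordinal) : ∃ ν, T.IsAdjacentLevel β ν := by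
  by_cases h : ∃ γ ∈ T.heights, β < γ
  · obtain ⟨γ, hγ, hβγ⟩ := h
    obtain ⟨⟨-, hocc⟩, hβmin⟩ := minAbove_spec hγ hβγ
    exact ⟨T.minAbove β, hocc, fun x _ hx => (hx.trans hβmin).le,
      fun x hxT hx => ⟨hβmin, minAbove_le ⟨(pos_of_gt hx).ne', x, hxT, rfl⟩ hx⟩⟩
  · obtain ⟨t, htT, htmax⟩ := T.elems.exists_max_image ht ⟨0, T.zero_mem⟩
    exact ⟨ht t, ⟨t, htT, rfl⟩, fun x hxT _ => htmax x hxT,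
      fun x hxT hx => absurd ⟨ht x, ⟨(pos_of_gt hx).ne', x, hxT, rfl⟩, hx⟩ h⟩

lemma ht_ne_of_notMem_heights (hβ0 : β ≠ 0) (hβT : β ∉ T.heights) (hx : x ∈ T.elems) :
    ht x ≠ β :=
  fun h => hβT ⟨hβ0, x, hx, h⟩

def newNode (T : SFT) (β t : Ordinal) : Ordinal := ω * β + T.elems.toList.idxOf t

def insertElems (T : SFT) (β ν : Ordinal) : Finset Ordinal :=
  T.elems ∪ (T.elems.filter (ht · = ν)).image (T.newNode β)

def insertProj (T : SFT) (β ν x : Ordinal) : Ordinal :=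
  if x ∈ T.elems then x else Function.invFunOn (T.newNode β) {t ∈ T.elems | ht t = ν} x

lemma ht_newNode : ht (T.newNode β t) = β := ht_omega0_mul_add _ _

lemma newNode_injOn : Set.InjOn (T.newNode β) T.elems := fun t htT _ _ h =>
  (List.idxOf_inj (Finset.mem_toList.2 htT)).1 (by exact_mod_cast add_left_cancel h)

lemma newNode_notMem (hβ0 : β ≠ 0) (hβT : β ∉ T.heights) : T.newNode β t ∉ T.elems :=
  fun h => ht_ne_of_notMem_heights hβ0 hβT h ht_newNode

lemma mem_insertElems :
    x ∈ T.insertElems β ν ↔ x ∈ T.elems ∨ ∃ t ∈ T.elems, ht t = ν ∧ T.newNode β t = x := by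
  simp [insertElems, and_assoc]

lemma newNode_mem_insertElems (htT : t ∈ T.elems) (htν : ht t = ν) :
    T.newNode β t ∈ T.insertElems β ν :=
  mem_insertElems.2 (Or.inr ⟨t, htT, htν, rfl⟩)

lemma ht_eq_of_mem_insertElems (hx : x ∈ T.insertElems β ν) (hxT : x ∉ T.elems) : ht x = β := by
  obtain ⟨s, -, -, rfl⟩ := (mem_insertElems.1 hx).resolve_left hxT
  exact ht_newNode

lemma insertProj_of_mem (hx : x ∈ T.elems) : T.insertProj β ν x = x := if_pos hx

lemma insertProj_newNode (hβ0 : β ≠ 0) (hβT : β ∉ T.heights) (htT : t ∈ T.elems)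
    (htν : ht t = ν) : T.insertProj β ν (T.newNode β t) = t := by
  rw [insertProj, if_neg (newNode_notMem hβ0 hβT)]
  exact (newNode_injOn.mono fun _ h => h.1).leftInvOn_invFunOn ⟨htT, htν⟩

lemma insertProj_mem (hβ0 : β ≠ 0) (hβT : β ∉ T.heights) (hx : x ∈ T.insertElems β ν) :
    T.insertProj β ν x ∈ T.elems := by
  rcases mem_insertElems.1 hx with hxT | ⟨s, hsT, hsν, rfl⟩
  · rwa [insertProj_of_mem hxT]
  · rwa [insertProj_newNode hβ0 hβT hsT hsν]

lemma ht_insertProj_le (hβ0 : β ≠ 0) (hβT : β ∉ T.heights) (hν : T.IsAdjacentLevel β ν)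
    (hx : x ∈ T.insertElems β ν) (hy : y ∈ T.insertElems β ν) (hxy : ht x ≤ ht y) :
    ht (T.insertProj β ν x) ≤ ht (T.insertProj β ν y) := by
  have hne := fun {x} => @ht_ne_of_notMem_heights T β x hβ0 hβT
  rcases mem_insertElems.1 hx with hxT | ⟨s, hsT, hsν, rfl⟩ <;>
    rcases mem_insertElems.1 hy with hyT | ⟨s', hsT', hsν', rfl⟩
  · rwa [insertProj_of_mem hxT, insertProj_of_mem hyT]
  · rw [insertProj_of_mem hxT, insertProj_newNode hβ0 hβT hsT' hsν', hsν']
    rw [ht_newNode] at hxy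
    exact hν.below x hxT (hxy.lt_of_ne (hne hxT))
  · rw [insertProj_newNode hβ0 hβT hsT hsν, insertProj_of_mem hyT, hsν]
    rw [ht_newNode] at hxy
    exact (hν.above y hyT (hxy.lt_of_ne (hne hyT).symm)).2
  · rw [insertProj_newNode hβ0 hβT hsT hsν, insertProj_newNode hβ0 hβT hsT' hsν', hsν, hsν']

lemma eq_of_insertProj_eq (hβ0 : β ≠ 0) (hβT : β ∉ T.heights) (hx : x ∈ T.insertElems β ν)
    (hy : y ∈ T.insertElems β ν) (hxy : ht x = ht y)
    (hπ : T.insertProj β ν x = T.insertProj β ν y) : x = y := by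
  rcases mem_insertElems.1 hx with hxT | ⟨s, hsT, hsν, rfl⟩ <;>
    rcases mem_insertElems.1 hy with hyT | ⟨s', hsT', hsν', rfl⟩
  · rwa [insertProj_of_mem hxT, insertProj_of_mem hyT] at hπ
  · exact absurd (hxy.trans ht_newNode) (ht_ne_of_notMem_heights hβ0 hβT hxT)
  · exact absurd (hxy.symm.trans ht_newNode) (ht_ne_of_notMem_heights hβ0 hβT hyT)
  · rw [insertProj_newNode hβ0 hβT hsT hsν, insertProj_newNode hβ0 hβT hsT' hsν'] at hπ
    rw [hπ]

lemma exists_le_insertProj (hβ0 : β ≠ 0) (hβT : β ∉ T.heights) (hν : T.IsAdjacentLevel β ν)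
    (hx : x ∈ T.insertElems β ν) (hα : ∃ z ∈ T.insertElems β ν, ht z = α) (hαx : α < ht x) :
    ∃ y ∈ T.insertElems β ν, ht y = α ∧ T.le (T.insertProj β ν y) (T.insertProj β ν x) := by
  obtain ⟨z, hz, rfl⟩ := hα
  rcases mem_insertElems.1 hz with hzT | ⟨s, -, -, rfl⟩
  · have hzπ : ht z ≤ ht (T.insertProj β ν x) := by
      rcases mem_insertElems.1 hx with hxT | ⟨s, hsT, hsν, rfl⟩
      · rw [insertProj_of_mem hxT]
        exact hαx.le
      · rw [insertProj_newNode hβ0 hβT hsT hsν, hsν]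
        rw [ht_newNode] at hαx
        exact hν.below z hzT hαx
    obtain ⟨y, hyT, hyz, hyx⟩ := exists_le_of_ht_le (insertProj_mem hβ0 hβT hx) ⟨z, hzT, rfl⟩ hzπ
    exact ⟨y, Finset.mem_union_left _ hyT, hyz, by rwa [insertProj_of_mem hyT]⟩
  · rw [ht_newNode] at hαx ⊢
    rcases mem_insertElems.1 hx with hxT | ⟨s, -, -, rfl⟩
    · obtain ⟨t, htT, htν, htx⟩ := exists_le_of_ht_le hxT hν.occupied (hν.above x hxT hαx).2
      exact ⟨_, newNode_mem_insertElems htT htν, ht_newNode,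
        by rwa [insertProj_newNode hβ0 hβT htT htν, insertProj_of_mem hxT]⟩
    · exact absurd hαx (ht_newNode (T := T)).not_gt

lemma exists_insertLevel (hβ0 : β ≠ 0) (hβ1 : β < ω1) (hβT : β ∉ T.heights)
    (hν : T.IsAdjacentLevel β ν) :
    ∃ U : SFT, U.elems = T.insertElems β ν ∧ ∀ x y, U.lt x y ↔
      x ∈ T.insertElems β ν ∧ y ∈ T.insertElems β ν ∧ ht x < ht y ∧
        T.le (T.insertProj β ν x) (T.insertProj β ν y) := by
  refine exists_of_proj T _ _ Finset.subset_union_left (fun x hx => ?_)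
    (fun x hx y hy => ht_insertProj_le hβ0 hβT hν hx hy)
    (fun x hx y hy => eq_of_insertProj_eq hβ0 hβT hx hy)
    (fun x hx α => exists_le_insertProj hβ0 hβT hν hx)
  rcases mem_insertElems.1 hx with hxT | ⟨s, -, -, rfl⟩
  · exact T.mem_ok x hxT
  · exact Or.inr ⟨omega0_le_omega0_mul_add hβ0 _, omega0_mul_add_lt_ω1 hβ1 _⟩

lemma heights_of_insertLevel (hβ0 : β ≠ 0) (hν : T.IsAdjacentLevel β ν)
    (hUe : U.elems = T.insertElems β ν) : U.heights = insert β T.heights := by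
  ext α
  constructor
  · rintro ⟨hα0, z, hzU, rfl⟩
    by_cases hzT : z ∈ T.elems
    · exact Or.inr ⟨hα0, z, hzT, rfl⟩
    · exact Or.inl (ht_eq_of_mem_insertElems (hUe ▸ hzU) hzT)
  · rintro (rfl | ⟨hα0, z, hzT, rfl⟩)
    · obtain ⟨t, htT, htν⟩ := hν.occupied
      exact ⟨hβ0, _, hUe ▸ newNode_mem_insertElems htT htν, ht_newNode⟩
    · exact ⟨hα0, z, hUe ▸ Finset.mem_union_left _ hzT, rfl⟩

lemma simpleExt_of_insertLevel (hβ0 : β ≠ 0) (hβT : β ∉ T.heights) (hν : T.IsAdjacentLevel β ν)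
    (hUe : U.elems = T.insertElems β ν) (hUlt : ∀ x y, U.lt x y ↔
      x ∈ T.insertElems β ν ∧ y ∈ T.insertElems β ν ∧ ht x < ht y ∧
        T.le (T.insertProj β ν x) (T.insertProj β ν y)) :
    SimpleExt U T := by
  have hTU : T.elems ⊆ U.elems := hUe ▸ Finset.subset_union_left
  have hnew : ∀ x ∈ U.elems, x ∉ T.elems → ht x = β := fun x hxU =>
    ht_eq_of_mem_insertElems (hUe ▸ hxU)
  refine ⟨⟨hTU, fun {x y} hxy => ?_⟩, fun x hxU hxT => hnew x hxU hxT ▸ hβT, ?_⟩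
  · have ⟨hx, hy⟩ := T.lt_mem hxy
    rw [hUlt, insertProj_of_mem hx, insertProj_of_mem hy]
    exact ⟨hUe ▸ hTU hx, hUe ▸ hTU hy, T.lt_ht hxy, Or.inl hxy⟩
  rintro _ ⟨hα0, z, hzU, rfl⟩ hαT hαmax t htmin t' htmin' hdrop
  rw [hnew z hzU fun hzT => hαT ⟨hα0, z, hzT, rfl⟩] at hαmax htmin htmin' hdrop
  obtain ⟨γ, hγ, hβγ⟩ := exists_lt_of_lt_csSup' hαmax
  obtain ⟨-, hβmin⟩ := minAbove_spec hγ hβγ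
  have hdrop_newNode : ∀ t ∈ T.level (T.minAbove β), U.drop β t = T.newNode β t := by
    intro t ⟨htT, htmin⟩
    obtain ⟨hβν, hνt⟩ := hν.above t htT (htmin ▸ hβmin)
    have htν : ht t = ν :=
      (htmin.trans_le (minAbove_le ⟨(pos_of_gt hβν).ne', hν.occupied⟩ hβν)).antisymm hνt
    refine drop_eq (hUe ▸ newNode_mem_insertElems htT htν) ht_newNode ((hUlt _ _).2
      ⟨newNode_mem_insertElems htT htν, hUe ▸ hTU htT, ?_, ?_⟩)
    · rw [ht_newNode, htν]
      exact hβν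
    · rw [insertProj_newNode hβ0 hβT htT htν, insertProj_of_mem htT]
      exact le_refl_of_mem htT
  rw [hdrop_newNode t htmin, hdrop_newNode t' htmin'] at hdrop
  exact newNode_injOn htmin.1 htmin'.1 hdrop

lemma exists_simpleExt_heights_insert (T : SFT) (hβ0 : β ≠ 0) (hβ1 : β < ω1) :
    ∃ U : SFT, SimpleExt U T ∧ U.heights = insert β T.heights := by
  by_cases hβT : β ∈ T.heights
  · exact ⟨T, SimpleExt.refl T, (Set.insert_eq_of_mem hβT).symm⟩
  obtain ⟨ν, hν⟩ := T.exists_isAdjacentLevel β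
  obtain ⟨U, hUe, hUlt⟩ := exists_insertLevel hβ0 hβ1 hβT hν
  exact ⟨U, simpleExt_of_insertLevel hβ0 hβT hν hUe hUlt, heights_of_insertLevel hβ0 hν hUe⟩

lemma exists_simpleExt_heights_union (T : SFT) (B : Finset Ordinal)
    (hB : ∀ β ∈ B, β ≠ 0 ∧ β < ω1) :
    ∃ U : SFT, SimpleExt U T ∧ U.heights = T.heights ∪ ↑B := by
  induction B using Finset.induction_on with
  | empty => exact ⟨T, SimpleExt.refl T, by simp⟩
  | insert β B _ ih =>
    obtain ⟨U, hTU, hU⟩ := ih fun γ hγ => hB γ (Finset.mem_insert_of_mem hγ)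
    obtain ⟨hβ0, hβ1⟩ := hB β (Finset.mem_insert_self β B)
    obtain ⟨U', hUU', hU'⟩ := U.exists_simpleExt_heights_insert hβ0 hβ1
    exact ⟨U', hTU.trans hUU', by rw [hU', hU, Finset.coe_insert, Set.union_insert]⟩

end SFT

end AKST

/-- Every standard finite tree has a simple extension with any prescribed
finite set of heights `B ⊆ ω₁ \ {0}` containing `ht[T]`. -/
theorem stmt_4 (T : SFT) (B : Finset Ordinal)
    (hB : ∀ β ∈ B, β ≠ 0 ∧ β < ω1) (hTB : T.heights ⊆ ↑B) :
    ∃ U : SFT, SimpleExt U T ∧ U.heights = ↑B := by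
  obtain ⟨U, hTU, hU⟩ := T.exists_simpleExt_heights_union B hB
  exact ⟨U, hTU, hU.trans (Set.union_eq_right.2 hTB)⟩
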